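/- For every n×n density matrix ρ, Q(ρ) ≤ ln n − C_n, and equality holds for the maximally mixed state: Q(I/n) = F(1/n, …, 1/n) = ln n − C_n. -/

import Mathlib

open MeasureTheory Matrix
open scoped ComplexOrder

/-- η(y) = −y ln y (with ln 0 = 0 in Mathlib, so 0 ln 0 = 0). -/
noncomputable def eta (y : ℝ) : ℝ := -(y * Real.log y)

/-- C_n = 1/2 + 1/3 + ⋯ + 1/n (C_1 = 0). -/
noncomputable def harmC (n : ℕ) : ℝ := ∑ k ∈ Finset.Icc 2 n, (1 : ℝ) / k

/-- Integral of a function over the probability simplex Δ_n with respect to the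
normalized uniform measure dx = (n−1)! dx_1 ⋯ dx_{n−1}, realised in the coordinates
(x_1, …, x_{n−1}), with x_n = 1 − (x_1 + ⋯ + x_{n−1}). -/
noncomputable def simplexIntegral (n : ℕ) (f : (Fin n → ℝ) → ℝ) : ℝ :=
  ((n - 1).factorial : ℝ) *
    ∫ y in {y : Fin (n - 1) → ℝ | (∀ i, 0 ≤ y i) ∧ ∑ i, y i ≤ 1},
      f (fun i => if h : (i : ℕ) < n - 1 then y ⟨(i : ℕ), h⟩ else 1 - ∑ j, y j)

/-- Subentropy of a probability vector: F(λ) = n ∫_{Δ_n} η(λ·x) dx − C_n. -/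
noncomputable def subF (n : ℕ) (lam : Fin n → ℝ) : ℝ :=
  (n : ℝ) * simplexIntegral n (fun x => eta (∑ i, lam i * x i)) - harmC n

/-- Subentropy of a (Hermitian) matrix: Q(ρ) = F(λ(ρ)), the subentropy of its
eigenvalue vector (junk value 0 for non-Hermitian matrices). -/
noncomputable def Qmat {ι : Type} [Fintype ι] [DecidableEq ι] (ρ : Matrix ι ι ℂ) : ℝ :=
  if h : ρ.IsHermitian then
    subF (Fintype.card ι) (fun k => h.eigenvalues ((Fintype.equivFin ι).symm k))
  else 0

/-!
The map exchanging a coordinate `x i` with the slack `1 - ∑ x` preserves the uniform measure on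
the simplex, so every barycentric coordinate has mean `1/n`. Integrating the tangent line of the
concave function `η` at `1/n` then gives the Jensen bound `∫ η(λ·x) dx ≤ η(1/n)`, whence
`F(λ) ≤ n η(1/n) - C_n = ln n - C_n`; for `λ = (1/n, …, 1/n)` the integrand is constant on the
simplex and equality holds. The same mean computation, combined with Fubini, yields
`vol {y ≥ 0, ∑ y ≤ c} = c^m / m!`, which is what makes `dx` a probability measure.
-/

open scoped Nat

def solidSimplex (ι : Type*) [Fintype ι] (c : ℝ) : Set (ι → ℝ) :=
  {y | (∀ i, 0 ≤ y i) ∧ ∑ i, y i ≤ c}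

section SolidSimplex

variable {ι : Type*} [Fintype ι]

theorem isClosed_solidSimplex (c : ℝ) : IsClosed (solidSimplex ι c) :=
  (isClosed_le continuous_const continuous_id).inter
    (isClosed_le (continuous_finsetSum _ fun i _ => continuous_apply i) continuous_const)

theorem measurableSet_solidSimplex (c : ℝ) : MeasurableSet (solidSimplex ι c) :=
  (isClosed_solidSimplex c).measurableSet

theorem isCompact_solidSimplex (c : ℝ) : IsCompact (solidSimplex ι c) :=
  isCompact_Icc.of_isClosed_subset (isClosed_solidSimplex c) fun _ hy =>
    ⟨hy.1, fun i => (Finset.single_le_sum (fun j _ => hy.1 j) (Finset.mem_univ i)).trans hy.2⟩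

theorem Continuous.integrableOn_solidSimplex {f : (ι → ℝ) → ℝ} (hf : Continuous f) (c : ℝ) :
    IntegrableOn f (solidSimplex ι c) :=
  hf.continuousOn.integrableOn_compact (isCompact_solidSimplex c)

theorem LinearMap.measurePreserving_of_involutive {f : (ι → ℝ) →ₗ[ℝ] ι → ℝ}
    (hf : Function.Involutive f) : MeasurePreserving f := by
  have hdet : LinearMap.det f * LinearMap.det f = 1 := by
    rw [← LinearMap.det_comp, show f ∘ₗ f = LinearMap.id from LinearMap.ext hf,
      LinearMap.det_id]
  have habs : |LinearMap.det f| = 1 := by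
    rcases mul_self_eq_one_iff.mp hdet with h | h <;> simp [h]
  refine ⟨f.continuous_on_pi.measurable, ?_⟩
  rw [Real.map_linearMap_volume_pi_eq_smul_volume_pi (by simp [← abs_ne_zero, habs]), abs_inv,
    habs, inv_one, ENNReal.ofReal_one, one_smul]

section Reflection

variable [DecidableEq ι]

/-- Exchanges the coordinate `y j` with the slack `c - ∑ i, y i`; in barycentric coordinates
on the simplex this is the transposition of two vertices. -/
def simplexReflection (c : ℝ) (j : ι) (y : ι → ℝ) : ι → ℝ :=
  Function.update y j (c - ∑ i, y i)

theorem sum_simplexReflection (c : ℝ) (j : ι) (y : ι → ℝ) :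
    ∑ i, simplexReflection c j y i = c - y j := by
  rw [simplexReflection, Finset.sum_update_of_mem (Finset.mem_univ j),
    ← Finset.sum_erase_add _ _ (Finset.mem_univ j), Finset.sdiff_singleton_eq_erase]
  ring

theorem simplexReflection_involutive (c : ℝ) (j : ι) :
    Function.Involutive (simplexReflection c j) := fun y => by
  rw [simplexReflection, sum_simplexReflection, simplexReflection, Function.update_idem,
    sub_sub_cancel, Function.update_eq_self]

def simplexReflectionLinear (j : ι) : (ι → ℝ) →ₗ[ℝ] ι → ℝ where
  toFun := simplexReflection 0 j
  map_add' y z := by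
    ext i
    rcases eq_or_ne i j with rfl | h
    · simp [simplexReflection, Finset.sum_add_distrib]; ring
    · simp [simplexReflection, h]
  map_smul' a y := by
    ext i
    rcases eq_or_ne i j with rfl | h
    · simp [simplexReflection, Finset.mul_sum]
    · simp [simplexReflection, h]

theorem measurePreserving_simplexReflection (c : ℝ) (j : ι) :
    MeasurePreserving (simplexReflection c j) := by
  have hL : simplexReflection c j = (· + Pi.single j c) ∘ simplexReflectionLinear j := by
    ext y i
    rcases eq_or_ne i j with rfl | h
    · simp [simplexReflectionLinear, simplexReflection]; ring
    · simp [simplexReflectionLinear, simplexReflection, h]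
  rw [hL]
  exact (measurePreserving_add_right volume _).comp
    (LinearMap.measurePreserving_of_involutive (simplexReflection_involutive 0 j))

theorem simplexReflection_mem_solidSimplex {c : ℝ} (j : ι) {y : ι → ℝ}
    (hy : y ∈ solidSimplex ι c) : simplexReflection c j y ∈ solidSimplex ι c := by
  refine ⟨fun i => ?_, by rw [sum_simplexReflection]; linarith [hy.1 j]⟩
  rcases eq_or_ne i j with rfl | h
  · simpa [simplexReflection] using hy.2
  · simpa [simplexReflection, h] using hy.1 i

theorem preimage_simplexReflection_solidSimplex (c : ℝ) (j : ι) :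
    simplexReflection c j ⁻¹' solidSimplex ι c = solidSimplex ι c :=
  Set.Subset.antisymm
    (fun y hy => simplexReflection_involutive c j y ▸ simplexReflection_mem_solidSimplex j hy)
    fun _ => simplexReflection_mem_solidSimplex j

theorem setIntegral_solidSimplex_apply_eq_sub_sum (c : ℝ) (j : ι) :
    ∫ y in solidSimplex ι c, y j = ∫ y in solidSimplex ι c, (c - ∑ i, y i) := by
  have hemb : MeasurableEmbedding (simplexReflection c j) :=
    (measurePreserving_simplexReflection c j).measurable.measurableEmbedding
      (simplexReflection_involutive c j).injective
  have h := (measurePreserving_simplexReflection c j).setIntegral_preimage_emb hemb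
    (fun y => y j) (solidSimplex ι c)
  rw [preimage_simplexReflection_solidSimplex] at h
  rw [← h]
  simp [simplexReflection]

end Reflection

theorem setIntegral_solidSimplex_sub_sum (c : ℝ) :
    ∫ y in solidSimplex ι c, (c - ∑ i, y i) =
      c * volume.real (solidSimplex ι c) / (Fintype.card ι + 1) := by
  classical
  have hsum : ∫ y in solidSimplex ι c, ∑ i, y i =
      Fintype.card ι * ∫ y in solidSimplex ι c, (c - ∑ i, y i) := by
    rw [integral_finsetSum _ fun i _ => (continuous_apply i).integrableOn_solidSimplex c]
    simp [setIntegral_solidSimplex_apply_eq_sub_sum c]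
  have hsub : ∫ y in solidSimplex ι c, (c - ∑ i, y i) =
      c * volume.real (solidSimplex ι c) - ∫ y in solidSimplex ι c, ∑ i, y i := by
    rw [integral_sub (continuous_const.integrableOn_solidSimplex c)
      ((continuous_finsetSum _ fun i _ => continuous_apply i).integrableOn_solidSimplex c),
      setIntegral_const, smul_eq_mul, mul_comm]
  rw [eq_div_iff (by positivity)]
  linarith

theorem setIntegral_solidSimplex_apply (c : ℝ) (j : ι) :
    ∫ y in solidSimplex ι c, y j = c * volume.real (solidSimplex ι c) / (Fintype.card ι + 1) := by
  classical
  rw [setIntegral_solidSimplex_apply_eq_sub_sum, setIntegral_solidSimplex_sub_sum]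

end SolidSimplex

theorem cons_mem_solidSimplex_iff {m : ℕ} {c t : ℝ} {y : Fin m → ℝ} :
    Fin.cons t y ∈ solidSimplex (Fin (m + 1)) c ↔ 0 ≤ t ∧ y ∈ solidSimplex (Fin m) (c - t) := by
  simp only [solidSimplex, Set.mem_ofPred_eq, Fin.forall_fin_succ, Fin.sum_univ_succ,
    Fin.cons_zero, Fin.cons_succ, le_sub_iff_add_le', and_assoc]

theorem volume_setOf_cons_mem_solidSimplex (m : ℕ) (c : ℝ) (y : Fin m → ℝ) :
    volume {t : ℝ | Fin.cons t y ∈ solidSimplex (Fin (m + 1)) c} =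
      (solidSimplex (Fin m) c).indicator (fun y => ENNReal.ofReal (c - ∑ i, y i)) y := by
  simp only [cons_mem_solidSimplex_iff]
  by_cases hy : y ∈ solidSimplex (Fin m) c
  · rw [Set.indicator_of_mem hy, ← sub_zero (c - _), ← Real.volume_Icc]
    congr 1
    ext t
    simp only [solidSimplex, Set.mem_ofPred_eq, Set.mem_Icc, hy.1, implies_true, true_and]
    constructor <;> rintro ⟨h0, h⟩ <;> exact ⟨h0, by linarith⟩
  · rw [Set.indicator_of_notMem hy, ← measure_empty (μ := (volume : Measure ℝ))]
    congr 1
    exact Set.eq_empty_of_forall_notMem fun t ⟨ht, hyt⟩ => hy ⟨hyt.1, by linarith [hyt.2]⟩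

theorem volume_solidSimplex_succ (m : ℕ) (c : ℝ) :
    volume (solidSimplex (Fin (m + 1)) c) =
      ENNReal.ofReal (∫ y in solidSimplex (Fin m) c, (c - ∑ i, y i)) := by
  let e := MeasurableEquiv.piFinSuccAbove (fun _ : Fin (m + 1) => ℝ) 0
  have hA : MeasurableSet (e.symm ⁻¹' solidSimplex (Fin (m + 1)) c) :=
    e.symm.measurable (measurableSet_solidSimplex c)
  have hnonneg : 0 ≤ᵐ[volume.restrict (solidSimplex (Fin m) c)] fun y => c - ∑ i, y i :=
    (ae_restrict_mem (measurableSet_solidSimplex c)).mono fun y hy => sub_nonneg.2 hy.2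
  rw [← (volume_preserving_piFinSuccAbove (fun _ => ℝ) 0).symm.measure_preimage
      (measurableSet_solidSimplex c).nullMeasurableSet, Measure.volume_eq_prod,
    Measure.prod_apply_symm hA,
    ofReal_integral_eq_lintegral_ofReal
      ((by fun_prop : Continuous fun y : Fin m → ℝ => c - ∑ i, y i).integrableOn_solidSimplex c)
      hnonneg,
    ← lintegral_indicator (measurableSet_solidSimplex c)]
  congr 1
  ext y
  rw [← volume_setOf_cons_mem_solidSimplex]
  congr 1
  ext t
  simp only [e, MeasurableEquiv.piFinSuccAbove_symm_apply, Fin.insertNthEquiv_zero,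
    Set.mem_preimage, Set.mem_ofPred_eq]
  rfl

theorem volume_solidSimplex (m : ℕ) {c : ℝ} (hc : 0 ≤ c) :
    volume (solidSimplex (Fin m) c) = ENNReal.ofReal (c ^ m / m !) := by
  induction m with
  | zero =>
    have : solidSimplex (Fin 0) c = Set.univ := by ext y; simp [solidSimplex, hc]
    simp [this, volume_pi]
  | succ m ih =>
    rw [volume_solidSimplex_succ, setIntegral_solidSimplex_sub_sum, measureReal_def, ih,
      ENNReal.toReal_ofReal (by positivity), Fintype.card_fin, Nat.factorial_succ]
    congr 1
    push_cast
    field_simp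
    ring

theorem measureReal_solidSimplex_one (m : ℕ) :
    volume.real (solidSimplex (Fin m) 1) = (m ! : ℝ)⁻¹ := by
  rw [measureReal_def, volume_solidSimplex m zero_le_one, one_pow, one_div,
    ENNReal.toReal_ofReal (by positivity)]

theorem setIntegral_solidSimplex_snoc (m : ℕ) (c : ℝ) (i : Fin (m + 1)) :
    ∫ y in solidSimplex (Fin m) c, (Fin.snoc y (c - ∑ j, y j) : Fin (m + 1) → ℝ) i =
      c * volume.real (solidSimplex (Fin m) c) / (m + 1) := by
  induction i using Fin.lastCases with
  | last => simpa using setIntegral_solidSimplex_sub_sum (ι := Fin m) c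
  | cast k => simpa using setIntegral_solidSimplex_apply c k

theorem snoc_mem_stdSimplex {m : ℕ} {y : Fin m → ℝ} (hy : y ∈ solidSimplex (Fin m) 1) :
    (Fin.snoc y (1 - ∑ j, y j) : Fin (m + 1) → ℝ) ∈ stdSimplex ℝ (Fin (m + 1)) := by
  refine ⟨fun i => ?_, by simp [Fin.sum_univ_castSucc]⟩
  induction i using Fin.lastCases with
  | last => simpa using hy.2
  | cast k => simpa using hy.1 k

theorem simplexIntegral_succ (m : ℕ) (f : (Fin (m + 1) → ℝ) → ℝ) :
    simplexIntegral (m + 1) f =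
      m ! * ∫ y in solidSimplex (Fin m) 1, f (Fin.snoc y (1 - ∑ j, y j)) :=
  rfl

theorem continuous_snoc_sub_sum (m : ℕ) (c : ℝ) :
    Continuous fun y : Fin m → ℝ => (Fin.snoc y (c - ∑ j, y j) : Fin (m + 1) → ℝ) :=
  Continuous.finSnoc (A := fun _ => ℝ) continuous_id (by fun_prop)

section SimplexIntegral

variable {m : ℕ}

theorem simplexIntegral_congr {f g : (Fin (m + 1) → ℝ) → ℝ}
    (hfg : ∀ x ∈ stdSimplex ℝ (Fin (m + 1)), f x = g x) :
    simplexIntegral (m + 1) f = simplexIntegral (m + 1) g := by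
  rw [simplexIntegral_succ, simplexIntegral_succ, setIntegral_congr_fun
    (measurableSet_solidSimplex 1) fun y hy => hfg _ (snoc_mem_stdSimplex hy)]

theorem simplexIntegral_mono {f g : (Fin (m + 1) → ℝ) → ℝ} (hf : Continuous f)
    (hg : Continuous g) (hfg : ∀ x ∈ stdSimplex ℝ (Fin (m + 1)), f x ≤ g x) :
    simplexIntegral (m + 1) f ≤ simplexIntegral (m + 1) g := by
  rw [simplexIntegral_succ, simplexIntegral_succ]
  refine mul_le_mul_of_nonneg_left (setIntegral_mono_on
    ((hf.comp (continuous_snoc_sub_sum m 1)).integrableOn_solidSimplex 1)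
    ((hg.comp (continuous_snoc_sub_sum m 1)).integrableOn_solidSimplex 1)
    (measurableSet_solidSimplex 1) fun y hy => hfg _ (snoc_mem_stdSimplex hy)) (by positivity)

theorem simplexIntegral_affine (a b : ℝ) (lam : Fin (m + 1) → ℝ) :
    simplexIntegral (m + 1) (fun x => a + b * ∑ i, lam i * x i) =
      a + b * (∑ i, lam i) / (m + 1) := by
  have hcoord (i : Fin (m + 1)) : IntegrableOn
      (fun y : Fin m → ℝ => lam i * (Fin.snoc y (1 - ∑ j, y j) : Fin (m + 1) → ℝ) i)
      (solidSimplex (Fin m) 1) :=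
    (continuous_const.mul ((continuous_apply i).comp
      (continuous_snoc_sub_sum m 1))).integrableOn_solidSimplex 1
  rw [simplexIntegral_succ, integral_add (continuous_const.integrableOn_solidSimplex 1)
    ((integrable_finsetSum _ fun i _ => hcoord i).const_mul b), integral_const_mul,
    integral_finsetSum _ fun i _ => hcoord i, setIntegral_const]
  simp_rw [integral_const_mul, setIntegral_solidSimplex_snoc, measureReal_solidSimplex_one,
    smul_eq_mul, ← Finset.sum_mul]
  have : (m ! : ℝ) ≠ 0 := by positivity
  field_simp

theorem simplexIntegral_const (a : ℝ) : simplexIntegral (m + 1) (fun _ => a) = a := by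
  simpa using simplexIntegral_affine (m := m) a 0 0

end SimplexIntegral

theorem eta_eq_negMulLog : eta = Real.negMulLog := by
  ext y
  simp [eta, Real.negMulLog]

@[fun_prop]
theorem continuous_eta : Continuous eta :=
  eta_eq_negMulLog ▸ Real.continuous_negMulLog

theorem mul_eta_inv (x : ℝ) : x * eta x⁻¹ = Real.log x := by
  rcases eq_or_ne x 0 with rfl | hx
  · simp
  · rw [eta, Real.log_inv]
    field_simp

theorem eta_le_tangent {s t : ℝ} (hs : 0 < s) (ht : 0 ≤ t) :
    eta t ≤ eta s + (-Real.log s - 1) * (t - s) := by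
  have h := Real.negMulLog_le_one_sub_self (div_nonneg ht hs.le)
  rw [div_eq_mul_inv, Real.negMulLog_mul, ← eta_eq_negMulLog, eta, eta, Real.log_inv] at h
  rw [eta, eta]
  have h' := mul_le_mul_of_nonneg_left h hs.le
  field_simp at h'
  linarith

theorem simplexIntegral_eta_le {m : ℕ} {lam : Fin (m + 1) → ℝ}
    (hlam : lam ∈ stdSimplex ℝ (Fin (m + 1))) :
    simplexIntegral (m + 1) (fun x => eta (∑ i, lam i * x i)) ≤ eta (m + 1 : ℝ)⁻¹ := by
  set s : ℝ := (m + 1 : ℝ)⁻¹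
  set b : ℝ := -Real.log s - 1
  have hs : 0 < s := by positivity
  calc simplexIntegral (m + 1) (fun x => eta (∑ i, lam i * x i))
      ≤ simplexIntegral (m + 1) (fun x => (eta s - b * s) + b * ∑ i, lam i * x i) := by
        refine simplexIntegral_mono (by fun_prop) (by fun_prop) fun x hx => ?_
        exact (eta_le_tangent (s := s) hs
          (Finset.sum_nonneg fun i _ => mul_nonneg (hlam.1 i) (hx.1 i))).trans_eq (by ring)
    _ = eta s := by
        rw [simplexIntegral_affine, hlam.2]
        ring

theorem subF_le_log_sub_harmC {n : ℕ} {lam : Fin n → ℝ} (hlam : lam ∈ stdSimplex ℝ (Fin n)) :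
    subF n lam ≤ Real.log n - harmC n := by
  obtain ⟨m, rfl⟩ : ∃ m, n = m + 1 :=
    Nat.exists_eq_succ_of_ne_zero (by rintro rfl; simpa using hlam.2)
  rw [subF, ← mul_eta_inv]
  push_cast
  gcongr
  exact simplexIntegral_eta_le hlam

theorem subF_uniform (n : ℕ) : subF n (fun _ => (n : ℝ)⁻¹) = Real.log n - harmC n := by
  rcases n with _ | m
  · simp [subF, harmC]
  · have hconst : simplexIntegral (m + 1) (fun x => eta (∑ i, ((m + 1 : ℕ) : ℝ)⁻¹ * x i)) =
        eta ((m + 1 : ℕ) : ℝ)⁻¹ := by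
      rw [simplexIntegral_congr (g := fun _ => eta ((m + 1 : ℕ) : ℝ)⁻¹) fun x hx => by
        rw [← Finset.mul_sum, hx.2, mul_one], simplexIntegral_const]
    rw [subF, hconst, mul_eta_inv]

theorem Matrix.IsHermitian.eigenvalues_eq_of_eq_smul_one {𝕜 : Type*} [RCLike 𝕜] {ι : Type*}
    [Fintype ι] [DecidableEq ι] {A : Matrix ι ι 𝕜} (hA : A.IsHermitian) {r : ℝ}
    (h : A = (r : 𝕜) • 1) (i : ι) : hA.eigenvalues i = r := by
  subst h
  rw [hA.eigenvalues_eq, smul_mulVec, one_mulVec, dotProduct_smul, dotProduct_comm,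
    ← EuclideanSpace.inner_eq_star_dotProduct, inner_self_eq_norm_sq_to_K,
    hA.eigenvectorBasis.orthonormal.1 i]
  simp

section Qmat

variable {ι : Type} [Fintype ι] [DecidableEq ι]

theorem Qmat_le_log_sub_harmC {ρ : Matrix ι ι ℂ} (hρ : ρ.PosSemidef) (ht : ρ.trace = 1) :
    Qmat ρ ≤ Real.log (Fintype.card ι) - harmC (Fintype.card ι) := by
  rw [Qmat, dif_pos hρ.isHermitian]
  refine subF_le_log_sub_harmC ⟨fun k => hρ.eigenvalues_nonneg _, ?_⟩
  rw [Equiv.sum_comp (Fintype.equivFin ι).symm]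
  apply Complex.ofReal_injective
  push_cast
  exact hρ.isHermitian.trace_eq_sum_eigenvalues.symm.trans ht

theorem Qmat_inv_card_smul_one :
    Qmat ((Fintype.card ι : ℂ)⁻¹ • (1 : Matrix ι ι ℂ)) =
      Real.log (Fintype.card ι) - harmC (Fintype.card ι) := by
  have hscalar : (Fintype.card ι : ℂ)⁻¹ • (1 : Matrix ι ι ℂ) =
      (((Fintype.card ι : ℝ)⁻¹ : ℝ) : ℂ) • 1 := by
    push_cast
    rfl
  have hH : ((Fintype.card ι : ℂ)⁻¹ • (1 : Matrix ι ι ℂ)).IsHermitian :=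
    isHermitian_one.smul (by simp [IsSelfAdjoint])
  rw [Qmat, dif_pos hH, ← subF_uniform]
  congr 1
  ext k
  exact hH.eigenvalues_eq_of_eq_smul_one hscalar _

end Qmat

theorem subentropy_le_log_sub_C_general (n : ℕ) (ρ : Matrix (Fin n) (Fin n) ℂ)
    (hρ : ρ.PosSemidef) (ht : ρ.trace = 1) :
    Qmat ρ ≤ Real.log n - harmC n ∧
    Qmat ((n : ℂ)⁻¹ • (1 : Matrix (Fin n) (Fin n) ℂ)) = Real.log n - harmC n ∧
    subF n (fun _ => (n : ℝ)⁻¹) = Real.log n - harmC n := by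
  refine ⟨?_, ?_, subF_uniform n⟩
  · simpa using Qmat_le_log_sub_harmC hρ ht
  · simpa using Qmat_inv_card_smul_one (ι := Fin n)

/-- Q(ρ) ≤ ln n − C_n, with equality for the maximally mixed state I/n. -/
theorem subentropy_le_log_sub_C (n : ℕ) (hn : 1 ≤ n) (ρ : Matrix (Fin n) (Fin n) ℂ)
    (hρ : ρ.PosSemidef) (ht : ρ.trace = 1) :
    Qmat ρ ≤ Real.log n - harmC n ∧
    Qmat ((n : ℂ)⁻¹ • (1 : Matrix (Fin n) (Fin n) ℂ)) = Real.log n - harmC n ∧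
    subF n (fun _ => (n : ℝ)⁻¹) = Real.log n - harmC n :=
  subentropy_le_log_sub_C_general n ρ hρ ht
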